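/- arXiv:cond-mat/0102078 — 2 statements merged into one kernel-verified Lean document; each statement's English description precedes it below -/
import Mathlib

section
/- For a connected planar graph G with planar dual G^D and any edge set S ⊆ E, the number of connected components satisfies p(S) = |V| - |S| + p(S^D) - 1, where S^D is the complementary dual edge set. -/
/-!
Combinatorial-map framework for planar graph duality.  A finite connected graph
embedded in a surface is encoded by its dart set `D`, the vertex rotation `σ`
and the fixed-point-free edge involution `α`; vertices, edges and faces are the
orbits of `σ`, `α` and `α ∘ σ` respectively.  The map is planar (genus 0) iff
it is connected and satisfies Euler's relation `|V| + |F| = |E| + 2`.  The dual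
map is obtained by exchanging the roles of the vertex and face permutations;
it keeps the same darts and the same edge involution, so edges of the map and
of its dual are canonically identified.
-/

structure CombMap where
  D : Type
  [fintypeD : Fintype D]
  [decD : DecidableEq D]
  σ : Equiv.Perm D
  α : Equiv.Perm D
  hinvol : ∀ d, α (α d) = d
  hfree : ∀ d, α d ≠ d

attribute [instance] CombMap.fintypeD CombMap.decD

namespace CombMap

variable (M : CombMap)

/-- orbit relation of a permutation -/
def orbitRel (f : Equiv.Perm M.D) (a b : M.D) : Prop := b = f a

/-- number of vertices: orbits of `σ` -/
noncomputable def nV : ℕ := Nat.card (Quot (M.orbitRel M.σ))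

/-- number of edges: orbits of the involution `α` -/
noncomputable def nE : ℕ := Nat.card (Quot (M.orbitRel M.α))

/-- number of faces: orbits of the face permutation `σ ∘ α` -/
noncomputable def nF : ℕ := Nat.card (Quot (M.orbitRel (M.α.trans M.σ)))

/-- the map is connected -/
def Connected : Prop :=
  ∀ a b : M.D, Relation.EqvGen (fun x y => y = M.σ x ∨ y = M.α x) a b

/-- planar = connected of genus `0`, i.e. Euler's relation holds -/
def Planar : Prop := M.Connected ∧ M.nV + M.nF = M.nE + 2

/-- the dual map: the face permutation becomes the vertex permutation -/
def dual : CombMap where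
  D := M.D
  σ := M.α.trans M.σ
  α := M.α
  hinvol := M.hinvol
  hfree := M.hfree

/-- an edge: an unordered pair `{d, α d}` of darts -/
def Edge : Type := {p : Finset M.D // ∃ d : M.D, p = {d, M.α d}}

noncomputable instance : Fintype M.Edge := by
  classical exact Subtype.fintype _

instance : DecidableEq M.Edge := Subtype.instDecidableEq

/-- the darts belonging to an edge set -/
def darts (S : Finset M.Edge) : Set M.D := {d | ∃ p ∈ S, d ∈ p.val}

/-- `p S`: the number of connected components of the spanning subgraph of the
map with edge set `S`: darts are identified along vertex rotations and along
the involution for darts belonging to `S`. -/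
noncomputable def pS (S : Finset M.Edge) : ℕ :=
  Nat.card (Quot (fun a b : M.D =>
    b = M.σ a ∨ (a ∈ M.darts S ∧ b = M.α a)))

/-- `p(S^D)`: the number of connected components of the spanning subgraph of
the dual map whose edge set is the complement `Sᶜ` (an edge of the dual lies in
`S^D` iff its dual edge is not in `S`). -/
noncomputable def pSdual (S : Finset M.Edge) : ℕ :=
  Nat.card (Quot (fun a b : M.D =>
    b = M.σ (M.α a) ∨ (a ∈ M.darts Sᶜ ∧ b = M.α a)))

/-- the Fortuin–Kasteleyn partition function `Z(M; q, v)` -/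
noncomputable def Z (F : Type) [Field F] (q v : F) : F :=
  ∑ S : Finset M.Edge, v ^ S.card * q ^ M.pS S

end CombMap

/-!
Work with an arbitrary vertex rotation `ρ` of the darts: its face permutation `ρ ∘ α` is the
vertex rotation of the dual, and `(ρ ∘ α) ∘ α = ρ`. For an edge `e = {d, α d}` of a set `T`, walk
from `d` turning like `ρ ∘ α` at darts of `T` and like `ρ` elsewhere. If the walk reaches `α d`,
every step is a move in the dual graph of `Tᶜ`, so the dual endpoints of `e` are joined there;
otherwise it returns to `d` without using `e`, so the endpoints of `e` are joined in `T \ {e}`.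
Hence adding an edge to `S` either lowers `p(S)` by at most one and leaves `p(S^D)` unchanged, or
leaves `p(S)` unchanged and raises `p(S^D)` by at most one. Induction on `S` gives
`|V| + p(S^D) ≤ p(S) + |S| + 1` for every connected map; the same inequality for the dual and
`Sᶜ`, added to it, is Euler's relation `|V| + |F| = |E| + 2`, so both are equalities.
-/

open Relation Function

section QuotCard

variable {α : Type*} {r r' : α → α → Prop}

theorem card_quot_le_of_le_eqvGen [Finite α] (h : r ≤ EqvGen r') :
    Nat.card (Quot r') ≤ Nat.card (Quot r) :=
  Nat.card_le_card_of_surjective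
    (Quot.lift (Quot.mk r') fun _ _ hxy => Quot.eqvGen_sound (h _ _ hxy))
    (Quot.ind fun x => ⟨Quot.mk r x, rfl⟩)

theorem card_quot_le_add_one [Finite α] {a b : α}
    (h : ∀ x y, r' x y → r x y ∨ s(x, y) = s(a, b)) :
    Nat.card (Quot r) ≤ Nat.card (Quot r') + 1 := by
  classical
  -- Merging the class of `b` into that of `a` is constant on `r'`-classes.
  let merge (x : α) : Quot r := if Quot.mk r x = Quot.mk r b then Quot.mk r a else Quot.mk r x
  have merge_resp : ∀ x y, r' x y → merge x = merge y := by
    intro x y hxy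
    rcases h x y hxy with hr | hab
    · simp only [merge, Quot.sound hr]
    · rcases Sym2.eq_iff.mp hab with ⟨rfl, rfl⟩ | ⟨rfl, rfl⟩ <;> simp [merge]
  let g : Option (Quot r') → Quot r := fun o => o.elim (Quot.mk r b) (Quot.lift merge merge_resp)
  have hg : Surjective g := by
    refine Quot.ind fun x => ?_
    by_cases hx : Quot.mk r x = Quot.mk r b
    · exact ⟨none, hx.symm⟩
    · exact ⟨some (Quot.mk r' x), if_neg hx⟩
  calc Nat.card (Quot r) ≤ Nat.card (Option (Quot r')) := Nat.card_le_card_of_surjective g hg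
    _ = Nat.card (Quot r') + 1 := Finite.card_option

theorem card_quot_eq_of_eqvGen [Finite α] {a b : α} (hle : r ≤ r')
    (h : ∀ x y, r' x y → r x y ∨ s(x, y) = s(a, b)) (hab : EqvGen r a b) :
    Nat.card (Quot r') = Nat.card (Quot r) := by
  refine le_antisymm (card_quot_le_of_le_eqvGen fun x y hxy => EqvGen.rel _ _ (hle x y hxy))
    (card_quot_le_of_le_eqvGen fun x y hxy => ?_)
  rcases h x y hxy with hr | hxy
  · exact EqvGen.rel _ _ hr
  · rcases Sym2.eq_iff.mp hxy with ⟨rfl, rfl⟩ | ⟨rfl, rfl⟩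
    exacts [hab, hab.symm]

end QuotCard

section Iterate

variable {α : Type*} {R : α → α → Prop} {f : α → α}

theorem eqvGen_iterate (h : ∀ x, EqvGen R x (f x)) (x : α) (n : ℕ) : EqvGen R x (f^[n] x) := by
  induction n with
  | zero => exact EqvGen.refl x
  | succ n ih => exact ih.trans _ _ _ (iterate_succ_apply' f n x ▸ h _)

theorem eqvGen_apply_of_mem_periodicPts {x : α} (hx : x ∈ periodicPts f)
    (h : ∀ m, f^[m] x ≠ x → EqvGen R (f^[m] x) (f^[m + 1] x)) : EqvGen R (f x) x := by
  have chain : ∀ m, EqvGen R (f x) (f^[m + 1] x) := by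
    intro m
    induction m with
    | zero => exact EqvGen.refl _
    | succ m ih =>
      by_cases hm : f^[m + 1] x = x
      · rw [iterate_succ_apply', hm]
        exact EqvGen.refl _
      · exact ih.trans _ _ _ (h _ hm)
  obtain ⟨n, hn, hper⟩ := mem_periodicPts.mp hx
  obtain ⟨m, rfl⟩ := Nat.exists_eq_add_one_of_ne_zero hn.ne'
  have hchain := chain m
  rwa [hper.eq] at hchain

end Iterate

namespace CombMap

variable (M : CombMap)

def edgeOf (x : M.D) : M.Edge := ⟨{x, M.α x}, x, rfl⟩

variable {M}

theorem edgeOf_eq_iff {x d : M.D} : M.edgeOf x = M.edgeOf d ↔ x = d ∨ x = M.α d := by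
  refine ⟨fun h => ?_, ?_⟩
  · have hx : x ∈ (M.edgeOf d).val := h ▸ Finset.mem_insert_self x _
    simpa [edgeOf] using hx
  · rintro (rfl | rfl)
    · rfl
    · exact Subtype.ext (by simp [edgeOf, M.hinvol, Finset.pair_comm])

theorem exists_eq_edgeOf (e : M.Edge) : ∃ d, e = M.edgeOf d :=
  let ⟨d, hd⟩ := e.2
  ⟨d, Subtype.ext hd⟩

theorem mem_darts {S : Finset M.Edge} {x : M.D} : x ∈ M.darts S ↔ M.edgeOf x ∈ S := by
  refine ⟨?_, fun h => ⟨M.edgeOf x, h, Finset.mem_insert_self x _⟩⟩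
  rintro ⟨p, hp, hx⟩
  obtain ⟨d, rfl⟩ := exists_eq_edgeOf p
  have hxd : x = d ∨ x = M.α d := by simpa [edgeOf] using hx
  rwa [edgeOf_eq_iff.mpr hxd]

variable (M)

def spanningRel (ρ : Equiv.Perm M.D) (S : Finset M.Edge) (a b : M.D) : Prop :=
  b = ρ a ∨ (M.edgeOf a ∈ S ∧ b = M.α a)

noncomputable def numComponents (ρ : Equiv.Perm M.D) (S : Finset M.Edge) : ℕ :=
  Nat.card (Quot (M.spanningRel ρ S))

def ConnectedWith (ρ : Equiv.Perm M.D) : Prop :=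
  ∀ a b, EqvGen (fun x y => y = ρ x ∨ y = M.α x) a b

theorem pS_eq_numComponents (S : Finset M.Edge) : M.pS S = M.numComponents M.σ S :=
  Nat.card_congr <| Quot.congrRight fun _ _ => by rw [spanningRel, mem_darts]

theorem pSdual_eq_numComponents (S : Finset M.Edge) :
    M.pSdual S = M.numComponents (M.α.trans M.σ) Sᶜ :=
  Nat.card_congr <| Quot.congrRight fun _ _ => by rw [spanningRel, mem_darts]; rfl

theorem trans_trans_α (ρ : Equiv.Perm M.D) : M.α.trans (M.α.trans ρ) = ρ :=
  Equiv.ext fun x => congrArg ρ (M.hinvol x)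

variable {M} {ρ : Equiv.Perm M.D}

theorem spanningRel_mono {S T : Finset M.Edge} (hST : S ⊆ T) :
    M.spanningRel ρ S ≤ M.spanningRel ρ T :=
  fun _ _ => Or.imp_right fun h => ⟨hST h.1, h.2⟩

theorem spanningRel_erase_or_of_spanningRel (S : Finset M.Edge) (d : M.D) {x y : M.D}
    (h : M.spanningRel ρ S x y) :
    M.spanningRel ρ (S.erase (M.edgeOf d)) x y ∨ s(x, y) = s(d, M.α d) := by
  rcases h with h | ⟨hx, rfl⟩
  · exact Or.inl (Or.inl h)
  by_cases hxd : M.edgeOf x = M.edgeOf d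
  · right
    rcases edgeOf_eq_iff.mp hxd with rfl | rfl
    · rfl
    · rw [M.hinvol, Sym2.eq_swap]
  · exact Or.inl (Or.inr ⟨Finset.mem_erase.mpr ⟨hxd, hx⟩, rfl⟩)

theorem numComponents_erase_le (S : Finset M.Edge) (e : M.Edge) :
    M.numComponents ρ (S.erase e) ≤ M.numComponents ρ S + 1 := by
  obtain ⟨d, rfl⟩ := exists_eq_edgeOf e
  exact card_quot_le_add_one fun _ _ => spanningRel_erase_or_of_spanningRel S d

theorem numComponents_eq_of_eqvGen_erase {S : Finset M.Edge} {d : M.D}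
    (h : EqvGen (M.spanningRel ρ (S.erase (M.edgeOf d))) d (M.α d)) :
    M.numComponents ρ S = M.numComponents ρ (S.erase (M.edgeOf d)) :=
  card_quot_eq_of_eqvGen (spanningRel_mono (Finset.erase_subset _ _))
    (fun _ _ => spanningRel_erase_or_of_spanningRel S d) h

theorem numComponents_empty : M.numComponents ρ ∅ = Nat.card (Quot (M.orbitRel ρ)) :=
  Nat.card_congr <| Quot.congrRight fun _ _ => by simp [spanningRel, orbitRel]

theorem ConnectedWith.numComponents_univ_le_one (hc : M.ConnectedWith ρ) :
    M.numComponents ρ Finset.univ ≤ 1 := by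
  rw [numComponents, Finite.card_le_one_iff_subsingleton]
  refine ⟨Quot.ind fun a => Quot.ind fun b => Quot.eqvGen_sound ?_⟩
  refine EqvGen.eqvGen_le (r' := EqvGen (M.spanningRel ρ Finset.univ))
    (fun x y hxy => EqvGen.rel _ _ ?_) a b (hc a b)
  rcases hxy with h | h
  exacts [Or.inl h, Or.inr ⟨Finset.mem_univ _, h⟩]

theorem ConnectedWith.trans_α (hc : M.ConnectedWith ρ) : M.ConnectedWith (M.α.trans ρ) := by
  intro a b
  refine EqvGen.eqvGen_le (r' := EqvGen fun x y => y = M.α.trans ρ x ∨ y = M.α x)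
    (fun x y hxy => ?_) a b (hc a b)
  have hα : EqvGen (fun x y => y = M.α.trans ρ x ∨ y = M.α x) x (M.α x) :=
    EqvGen.rel _ _ (Or.inr rfl)
  rcases hxy with rfl | rfl
  · refine hα.trans _ _ _ (EqvGen.rel _ _ (Or.inl ?_))
    simp [M.hinvol]
  · exact hα

variable (M)

theorem nE_eq_card_edge : M.nE = Fintype.card M.Edge := by
  rw [← Nat.card_eq_fintype_card, nE]
  refine Nat.card_eq_of_bijective (Quot.lift M.edgeOf fun a b hab => ?_) ⟨?_, ?_⟩
  · rw [orbitRel] at hab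
    exact edgeOf_eq_iff.mpr (Or.inr (hab ▸ (M.hinvol a).symm))
  · refine Quot.ind fun x => Quot.ind fun y hxy => ?_
    rcases edgeOf_eq_iff.mp hxy with rfl | rfl
    · rfl
    · exact Quot.sound (M.hinvol y).symm
  · intro e
    obtain ⟨d, rfl⟩ := exists_eq_edgeOf e
    exact ⟨Quot.mk _ d, rfl⟩

def faceStep (ρ : Equiv.Perm M.D) (T : Finset M.Edge) (x : M.D) : M.D :=
  if M.edgeOf x ∈ T then ρ (M.α x) else ρ x

variable {M}

theorem faceStep_injective (T : Finset M.Edge) : Injective (M.faceStep ρ T) := by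
  intro x y hxy
  have hα : ∀ z, M.edgeOf (M.α z) = M.edgeOf z := fun z => edgeOf_eq_iff.mpr (Or.inr rfl)
  unfold faceStep at hxy
  split_ifs at hxy with hx hy hy <;> have := ρ.injective hxy
  · exact M.α.injective this
  · exact absurd (this ▸ hα x ▸ hx) hy
  · exact absurd (this ▸ hα y ▸ hy) hx
  · exact this

theorem eqvGen_dual_faceStep (T : Finset M.Edge) (x : M.D) :
    EqvGen (M.spanningRel (M.α.trans ρ) Tᶜ) x (M.faceStep ρ T x) := by
  unfold faceStep
  split_ifs with hx
  · exact EqvGen.rel _ _ (Or.inl rfl)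
  · have hstep : M.spanningRel (M.α.trans ρ) Tᶜ x (M.α x) :=
      Or.inr ⟨Finset.mem_compl.mpr hx, rfl⟩
    refine (EqvGen.rel _ _ hstep).trans _ _ _ (EqvGen.rel _ _ (Or.inl ?_))
    simp [M.hinvol]

theorem eqvGen_faceStep_of_edgeOf_ne {T : Finset M.Edge} {e : M.Edge} {x : M.D}
    (hx : M.edgeOf x ≠ e) : EqvGen (M.spanningRel ρ (T.erase e)) x (M.faceStep ρ T x) := by
  unfold faceStep
  split_ifs with hxT
  · have hstep : M.spanningRel ρ (T.erase e) x (M.α x) :=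
      Or.inr ⟨Finset.mem_erase.mpr ⟨hx, hxT⟩, rfl⟩
    exact (EqvGen.rel _ _ hstep).trans _ _ _ (EqvGen.rel _ _ (Or.inl rfl))
  · exact EqvGen.rel _ _ (Or.inl rfl)

theorem eqvGen_dual_or_eqvGen_erase {T : Finset M.Edge} {d : M.D} (hd : M.edgeOf d ∈ T) :
    EqvGen (M.spanningRel (M.α.trans ρ) Tᶜ) d (M.α d) ∨
      EqvGen (M.spanningRel ρ (T.erase (M.edgeOf d))) d (M.α d) := by
  by_cases hreach : ∃ n, (M.faceStep ρ T)^[n] d = M.α d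
  · obtain ⟨n, hn⟩ := hreach
    exact Or.inl (hn ▸ eqvGen_iterate (eqvGen_dual_faceStep T) d n)
  simp only [not_exists] at hreach
  right
  have hreturn : EqvGen (M.spanningRel ρ (T.erase (M.edgeOf d))) (M.faceStep ρ T d) d := by
    refine eqvGen_apply_of_mem_periodicPts ((faceStep_injective T).mem_periodicPts d)
      fun m hm => ?_
    rw [iterate_succ_apply']
    exact eqvGen_faceStep_of_edgeOf_ne fun h => (edgeOf_eq_iff.mp h).elim hm (hreach m)
  have hface : M.spanningRel ρ (T.erase (M.edgeOf d)) (M.α d) (M.faceStep ρ T d) :=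
    Or.inl (if_pos hd)
  exact hreturn.symm.trans _ _ _ (EqvGen.rel _ _ hface).symm

theorem ConnectedWith.card_orbits_add_numComponents_le (hc : M.ConnectedWith ρ)
    (S : Finset M.Edge) :
    Nat.card (Quot (M.orbitRel ρ)) + M.numComponents (M.α.trans ρ) Sᶜ ≤
      M.numComponents ρ S + S.card + 1 := by
  induction S using Finset.induction_on with
  | empty =>
    have hdual := hc.trans_α.numComponents_univ_le_one
    rw [← numComponents_empty, Finset.compl_empty, Finset.card_empty]
    omega
  | @insert e S he ih =>
    obtain ⟨d, rfl⟩ := exists_eq_edgeOf e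
    have hcompl : (insert (M.edgeOf d) S)ᶜ = Sᶜ.erase (M.edgeOf d) := Finset.compl_insert
    rw [Finset.card_insert_of_notMem he, hcompl]
    rcases eqvGen_dual_or_eqvGen_erase (ρ := ρ) (Finset.mem_insert_self (M.edgeOf d) S)
      with hdual | hprimal
    · rw [hcompl] at hdual
      have hS := numComponents_erase_le (ρ := ρ) (insert (M.edgeOf d) S) (M.edgeOf d)
      rw [Finset.erase_insert he] at hS
      rw [← numComponents_eq_of_eqvGen_erase hdual]
      omega
    · have hT := numComponents_eq_of_eqvGen_erase hprimal
      rw [Finset.erase_insert he] at hT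
      have hSc := numComponents_erase_le (ρ := M.α.trans ρ) Sᶜ (M.edgeOf d)
      omega

end CombMap

theorem components_duality (M : CombMap) (hM : M.Planar) (S : Finset M.Edge) :
    (M.pS S : ℤ) = (M.nV : ℤ) - S.card + M.pSdual S - 1 := by
  have hc : M.ConnectedWith M.σ := hM.1
  have primal := hc.card_orbits_add_numComponents_le S
  have dual := hc.trans_α.card_orbits_add_numComponents_le Sᶜ
  rw [M.trans_trans_α, compl_compl] at dual
  have hV : M.nV = Nat.card (Quot (M.orbitRel M.σ)) := rfl
  have hF : M.nF = Nat.card (Quot (M.orbitRel (M.α.trans M.σ))) := rfl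
  have hcard := Finset.card_add_card_compl S
  have hE := M.nE_eq_card_edge
  have euler := hM.2
  rw [M.pS_eq_numComponents, M.pSdual_eq_numComponents]
  omega
end

section
/- The Potts partition function in Fortuin-Kasteleyn form satisfies Z(G; q, v) = Σ_{σ: V → {1,...,q}} Π_{{i,j} ∈ E} (1 + v·δ(σ_i, σ_j)) = Σ_{S ⊆ E} v^{|S|} q^{p(S)}, where p(S) is the number of connected components of the spanning subgraph (V, S). -/
/-!
STATEMENT 4: the Fortuin–Kasteleyn representation of the Potts partition
function:
`Σ_{σ : V → {1,…,q}} Π_{e ∈ E} (1 + v δ(σ_i,σ_j)) = Σ_{S ⊆ E} v^{|S|} q^{p(S)}`,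
where `p(S)` is the number of connected components of the spanning subgraph
`(V,S)`.
-/

structure Multigraph where
  V : Type
  E : Type
  [fintypeV : Fintype V]
  [fintypeE : Fintype E]
  [decV : DecidableEq V]
  [decE : DecidableEq E]
  ends : E → V × V

attribute [instance] Multigraph.fintypeV Multigraph.fintypeE Multigraph.decV
  Multigraph.decE

namespace Multigraph

variable (G : Multigraph)

def adj (S : Set G.E) (a b : G.V) : Prop :=
  ∃ e ∈ S, G.ends e = (a, b) ∨ G.ends e = (b, a)

/-- `p S`: the number of connected components of the spanning subgraph `(V, S)` -/
noncomputable def p (S : Set G.E) : ℕ := Nat.card (Quot (G.adj S))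

end Multigraph

lemma card_aux (G : Multigraph) (q : ℕ) (S : Finset G.E) :
    (Finset.univ.filter
        (fun σ : G.V → Fin q => ∀ e ∈ S, σ (G.ends e).1 = σ (G.ends e).2)).card
      = q ^ G.p (S : Set G.E) := by
  classical
  have : Finite (Quot (G.adj (S : Set G.E))) := Quot.finite _
  have : Fintype (Quot (G.adj (S : Set G.E))) := Fintype.ofFinite _
  let eqv : {σ : G.V → Fin q // ∀ e ∈ S, σ (G.ends e).1 = σ (G.ends e).2} ≃
      (Quot (G.adj (S : Set G.E)) → Fin q) :=
  { toFun := fun σ => Quot.lift σ.1 (by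
      rintro a b ⟨e, he, h | h⟩
      · have := σ.2 e he; rw [h] at this; exact this
      · have := σ.2 e he; rw [h] at this; exact this.symm)
    invFun := fun φ => ⟨φ ∘ Quot.mk _, by
      intro e he
      exact congrArg φ (Quot.sound ⟨e, Finset.mem_coe.mpr he, Or.inl (by simp)⟩)⟩
    left_inv := fun σ => rfl
    right_inv := fun φ => by
      funext x; induction x using Quot.ind; rfl }
  have h1 : (Finset.univ.filter
      (fun σ : G.V → Fin q => ∀ e ∈ S, σ (G.ends e).1 = σ (G.ends e).2)).card
      = Fintype.card {σ : G.V → Fin q // ∀ e ∈ S, σ (G.ends e).1 = σ (G.ends e).2} :=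
    (Fintype.card_subtype _).symm
  rw [h1, Fintype.card_congr eqv, Fintype.card_fun, Fintype.card_fin,
    Multigraph.p, Nat.card_eq_fintype_card]

/-- **Fortuin–Kasteleyn representation** of the Potts partition function. -/
theorem potts_fortuin_kasteleyn (G : Multigraph) (q : ℕ) (R : Type)
    [CommRing R] (v : R) :
    ∑ σ : G.V → Fin q, ∏ e : G.E,
        (1 + v * (if σ (G.ends e).1 = σ (G.ends e).2 then (1 : R) else 0)) =
      ∑ S : Finset G.E, v ^ S.card * (q : R) ^ G.p (S : Set G.E) := by
  classical
  have expand : ∀ σ : G.V → Fin q,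
      ∏ e : G.E, (1 + v * (if σ (G.ends e).1 = σ (G.ends e).2 then (1 : R) else 0))
      = ∑ S : Finset G.E, ∏ e ∈ S,
          (v * (if σ (G.ends e).1 = σ (G.ends e).2 then (1 : R) else 0)) := by
    intro σ
    have := Finset.prod_add
      (fun e : G.E => v * (if σ (G.ends e).1 = σ (G.ends e).2 then (1 : R) else 0))
      (fun _ => (1 : R)) Finset.univ
    simp only [Finset.prod_const_one, mul_one, Finset.powerset_univ] at this
    simpa [add_comm] using this
  rw [Finset.sum_congr rfl (fun σ _ => expand σ), Finset.sum_comm]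
  refine Finset.sum_congr rfl (fun S _ => ?_)
  have : ∀ σ : G.V → Fin q,
      (∏ e ∈ S, (v * (if σ (G.ends e).1 = σ (G.ends e).2 then (1 : R) else 0)))
      = v ^ S.card * (if ∀ e ∈ S, σ (G.ends e).1 = σ (G.ends e).2 then (1 : R) else 0) := by
    intro σ
    rw [Finset.prod_mul_distrib, Finset.prod_const, Finset.prod_boole]; simp
  rw [Finset.sum_congr rfl (fun σ _ => this σ), ← Finset.mul_sum,
    Finset.sum_boole, card_aux G q S]
  push_cast
  ring
end
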